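/- Let G be a (c−1)-atom (a connected graph with no clique separator of size at most c−1), and let T_c(G) be the bipartite incidence graph whose nodes are the maximal c-atoms of G and the inclusion-minimal cliques of size at most c that separate some pair of vertices of G, with an edge between a maximal c-atom G[A] and a minimal clique separator C whenever C ⊆ A. Then T_c(G) is connected. -/

import Mathlib

/-!
Two minimal clique separators `C` and `D` are joined in `T_c(G)` by induction on the strip
between them, the vertices on the side of `D` of `C` and on the side of `C` of `D`. Either
`C ∪ D` is `c`-inseparable and lies in one maximal atom, or a small clique separates some
`a ∈ C \ D` from some `b ∈ D \ C`; cut down to the strip and made minimal, it splits the strip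
into two smaller ones, one without `b` and one without `a`.

Every maximal atom `A ≠ V` contains a minimal clique separator, so every atom node is joined
to a separator node. Indeed, among the small clique separators `C` of `v ∉ A` from a vertex
of `A`, take one for which the side of `v` is largest. If some `w ∈ C` were separated from
`A`, then, since `C \ {w}` is too small to separate `G`, `w` has a neighbour on the side of
`v`, and a separator of `w` from `A` pushed into the other side of `C` would give a separator
whose side of `v` also contains `w`. So `A ∪ C` is `c`-inseparable, and `C ⊆ A`.
-/

variable {V : Type*}

/-- `C` separates `x` and `y` in `G`: neither endpoint is in `C` and every walk
from `x` to `y` meets `C`. -/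
def Separates (G : SimpleGraph V) (C : Set V) (x y : V) : Prop :=
  x ∉ C ∧ y ∉ C ∧ ∀ p : G.Walk x y, ∃ z ∈ C, z ∈ p.support

/-- `x` and `y` are `c`-inseparable in `G`: no clique of size at most `c` separates them. -/
def CInsep (G : SimpleGraph V) (c : ℕ) (x y : V) : Prop :=
  ∀ C : Set V, G.IsClique C → C.ncard ≤ c → ¬ Separates G C x y

/-- A set is `c`-inseparable if all its pairs of vertices are. -/
def InsepSet (G : SimpleGraph V) (c : ℕ) (A : Set V) : Prop :=
  ∀ x ∈ A, ∀ y ∈ A, CInsep G c x y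

/-- Maximal `c`-inseparable set. -/
def MaxInsepSet (G : SimpleGraph V) (c : ℕ) (A : Set V) : Prop :=
  InsepSet G c A ∧ ∀ B, A ⊆ B → InsepSet G c B → B = A

/-- `C` separates `x` and `y` within the induced subgraph `G[A]`. -/
def SeparatesWithin (G : SimpleGraph V) (A C : Set V) (x y : V) : Prop :=
  x ∈ A \ C ∧ y ∈ A \ C ∧
    ∀ p : G.Walk x y, (∀ z ∈ p.support, z ∈ A) → ∃ z ∈ C, z ∈ p.support

/-- `G[A]` is a `c`-atom: it has no clique separator of size at most `c`. -/
def AtomWithin (G : SimpleGraph V) (c : ℕ) (A : Set V) : Prop :=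
  ¬ ∃ C : Set V, C ⊆ A ∧ G.IsClique C ∧ C.ncard ≤ c ∧ ∃ x y, SeparatesWithin G A C x y

/-- `G[A]` is a maximal `c`-atom of `G`. -/
def MaxAtom (G : SimpleGraph V) (c : ℕ) (A : Set V) : Prop :=
  AtomWithin G c A ∧ ∀ B, A ⊆ B → AtomWithin G c B → B = A

/-- `C` is an inclusion-wise minimal clique separator of size at most `c`:
a clique of size at most `c` that separates some pair of vertices and is
inclusion-minimal among cliques separating that pair. -/
def MinCliqueSep (G : SimpleGraph V) (c : ℕ) (C : Set V) : Prop :=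
  G.IsClique C ∧ C.ncard ≤ c ∧
    ∃ x y : V, Separates G C x y ∧
      ∀ C' ⊆ C, G.IsClique C' → Separates G C' x y → C' = C

/-- Nodes of `T_c(G)` corresponding to maximal `c`-atoms (equivalently, maximal
`c`-inseparable vertex sets). -/
def AtomNode (G : SimpleGraph V) (c : ℕ) : Type _ := {A : Set V // MaxInsepSet G c A}

/-- Nodes of `T_c(G)` corresponding to minimal clique separators of size at most `c`. -/
def SepNode (G : SimpleGraph V) (c : ℕ) : Type _ := {C : Set V // MinCliqueSep G c C}

/-- The bipartite incidence graph `T_c(G)`: a maximal `c`-atom `A` is joined to a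
minimal clique separator `C` exactly when `C ⊆ A`. -/
def TcGraph (G : SimpleGraph V) (c : ℕ) : SimpleGraph (AtomNode G c ⊕ SepNode G c) where
  Adj n m :=
    (∃ (A : AtomNode G c) (C : SepNode G c),
        n = Sum.inl A ∧ m = Sum.inr C ∧ C.val ⊆ A.val) ∨
    (∃ (A : AtomNode G c) (C : SepNode G c),
        n = Sum.inr C ∧ m = Sum.inl A ∧ C.val ⊆ A.val)
  symm := by
    constructor
    rintro n m (⟨A, C, rfl, rfl, h⟩ | ⟨A, C, rfl, rfl, h⟩)
    · exact Or.inr ⟨A, C, rfl, rfl, h⟩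
    · exact Or.inl ⟨A, C, rfl, rfl, h⟩
  loopless := by
    constructor
    rintro n (⟨A, C, rfl, h, -⟩ | ⟨A, C, rfl, h, -⟩) <;> exact absurd h (by simp)

/-- `G` has no clique separator of size at most `c - 1`. -/
def NoSmallCliqueSep (G : SimpleGraph V) (c : ℕ) : Prop :=
  ∀ C : Set V, G.IsClique C → C.ncard ≤ c - 1 → ¬ ∃ x y, Separates G C x y

def ReachAvoiding (G : SimpleGraph V) (S : Set V) (x y : V) : Prop :=
  ∃ p : G.Walk x y, ∀ z ∈ p.support, z ∉ S

def closedSide (G : SimpleGraph V) (S : Set V) (a : V) : Set V :=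
  {x | ReachAvoiding G S a x} ∪ S

section

variable {G : SimpleGraph V} {S C D F : Set V} {a b u x y z : V}

namespace ReachAvoiding

lemma left_notMem (h : ReachAvoiding G S x y) : x ∉ S := by
  obtain ⟨p, hp⟩ := h
  exact hp x p.start_mem_support

protected lemma refl (hx : x ∉ S) : ReachAvoiding G S x x :=
  ⟨.nil, by simpa using hx⟩

protected lemma symm (h : ReachAvoiding G S x y) : ReachAvoiding G S y x := by
  obtain ⟨p, hp⟩ := h
  exact ⟨p.reverse, by simpa using hp⟩

protected lemma trans (h : ReachAvoiding G S x y) (h' : ReachAvoiding G S y z) :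
    ReachAvoiding G S x z := by
  obtain ⟨p, hp⟩ := h
  obtain ⟨q, hq⟩ := h'
  refine ⟨p.append q, fun w hw => ?_⟩
  rcases (SimpleGraph.Walk.mem_support_append_iff _ _).1 hw with hw | hw
  exacts [hp w hw, hq w hw]

lemma right_notMem (h : ReachAvoiding G S x y) : y ∉ S :=
  h.symm.left_notMem

lemma of_adj (hxy : G.Adj x y) (hx : x ∉ S) (hy : y ∉ S) : ReachAvoiding G S x y :=
  ⟨hxy.toWalk, by simp [hx, hy]⟩

lemma of_mem_support (p : G.Walk x y) (hp : ∀ w ∈ p.support, w ∉ S) (hz : z ∈ p.support) :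
    ReachAvoiding G S x z := by
  classical
  exact ⟨p.takeUntil z hz, fun w hw => hp w (p.support_takeUntil_subset_support hz hw)⟩

lemma of_mem_clique (hK : G.IsClique C) (hx : x ∈ C) (hy : y ∈ C) (hxS : x ∉ S)
    (hyS : y ∉ S) : ReachAvoiding G S x y := by
  rcases eq_or_ne x y with rfl | hne
  · exact .refl hxS
  · exact of_adj (hK hx hy hne) hxS hyS

lemma of_subset_closedSide (h : ReachAvoiding G F a x) (hab : ¬ ReachAvoiding G F a b)
    (hD : D ⊆ closedSide G F b) : ReachAvoiding G D a x := by
  obtain ⟨p, hp⟩ := h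
  refine ⟨p, fun z hz hzD => ?_⟩
  rcases hD hzD with hbz | hzF
  · exact hab ((of_mem_support p hp hz).trans hbz.symm)
  · exact hp z hz hzF

end ReachAvoiding

lemma SimpleGraph.IsClique.subset_closedSide (hC : G.IsClique C) (ha : a ∈ C) (haS : a ∉ S) :
    C ⊆ closedSide G S a := fun z hz =>
  (em (z ∈ S)).elim Or.inr fun hzS => Or.inl (.of_mem_clique hC ha hz haS hzS)

lemma mem_closedSide_of_adj (hxy : G.Adj x y) (hx : x ∈ closedSide G S a) (hxS : x ∉ S) :
    y ∈ closedSide G S a :=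
  (em (y ∈ S)).elim Or.inr fun hyS => Or.inl ((hx.resolve_right hxS).trans (.of_adj hxy hxS hyS))

lemma closedSide_subset_closedSide (hab : ¬ ReachAvoiding G F a b)
    (hF : F ⊆ closedSide G D u) (ha : ReachAvoiding G D u a) (hD : D ⊆ closedSide G F b) :
    closedSide G F a ⊆ closedSide G D u := by
  rintro x (hx | hx)
  · exact Or.inl (ha.trans (hx.of_subset_closedSide hab hD))
  · exact hF hx

lemma SimpleGraph.Walk.exists_reachAvoiding_adj_mem (p : G.Walk a b) (ha : a ∉ S)
    (hp : ∃ z ∈ S, z ∈ p.support) :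
    ∃ x y, ReachAvoiding G S a x ∧ G.Adj x y ∧ y ∈ S ∧ y ∈ p.support := by
  induction p with
  | nil =>
    obtain ⟨z, hzS, hz⟩ := hp
    rw [SimpleGraph.Walk.support_nil, List.mem_singleton] at hz
    exact absurd (hz ▸ hzS) ha
  | @cons a a' b h q ih =>
    by_cases ha' : a' ∈ S
    · exact ⟨a, a', .refl ha, h, ha', by simp⟩
    · obtain ⟨z, hzS, hz⟩ := hp
      have hzq : z ∈ q.support := by
        rw [SimpleGraph.Walk.support_cons, List.mem_cons] at hz
        exact hz.resolve_left (by rintro rfl; exact ha hzS)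
      obtain ⟨x, y, hx, hxy, hyS, hyq⟩ := ih ha' ⟨z, hzS, hzq⟩
      exact ⟨x, y, (ReachAvoiding.of_adj h ha ha').trans hx, hxy, hyS, by simp [hyq]⟩

end

section

variable {G : SimpleGraph V} {S C D E A B T : Set V} {a b x y : V} {c : ℕ}

lemma separates_iff : Separates G S x y ↔ x ∉ S ∧ y ∉ S ∧ ¬ ReachAvoiding G S x y := by
  simp only [Separates, ReachAvoiding, not_exists, not_forall, not_not, exists_prop, and_comm]

lemma Separates.symm (h : Separates G S x y) : Separates G S y x := by
  rw [separates_iff] at h ⊢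
  exact ⟨h.2.1, h.1, fun hyx => h.2.2 hyx.symm⟩

lemma CInsep.symm (h : CInsep G c x y) : CInsep G c y x :=
  fun S hS hSc hsep => h S hS hSc hsep.symm

lemma CInsep.reachAvoiding (h : CInsep G c x y) (hS : G.IsClique S) (hSc : S.ncard ≤ c)
    (hx : x ∉ S) (hy : y ∉ S) : ReachAvoiding G S x y := by
  by_contra hxy
  exact h S hS hSc (separates_iff.2 ⟨hx, hy, hxy⟩)

lemma SimpleGraph.IsClique.insepSet (hC : G.IsClique C) : InsepSet G c C :=
  fun _x hx _y hy _ _ _ hsep =>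
    (separates_iff.1 hsep).2.2 (.of_mem_clique hC hx hy hsep.1 hsep.2.1)

lemma insepSet_union_iff (hA : InsepSet G c A) (hB : InsepSet G c B) :
    InsepSet G c (A ∪ B) ↔ ∀ a ∈ A, ∀ b ∈ B, CInsep G c a b := by
  refine ⟨fun h a ha b hb => h a (.inl ha) b (.inr hb), fun h => ?_⟩
  rintro x (hx | hx) y (hy | hy)
  exacts [hA x hx y hy, h x hx y hy, (h y hy x hx).symm, hB x hx y hy]

lemma exists_separated_of_not_insepSet_union (hC : G.IsClique C) (hD : G.IsClique D)
    (h : ¬ InsepSet G c (C ∪ D)) :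
    ∃ a ∈ C, a ∉ D ∧ ∃ b ∈ D, b ∉ C ∧ ∃ E, G.IsClique E ∧ E.ncard ≤ c ∧ Separates G E a b := by
  simp only [insepSet_union_iff hC.insepSet hD.insepSet, CInsep, not_forall, not_not] at h
  obtain ⟨a, ha, b, hb, E, hE, hEc, hsep⟩ := h
  refine ⟨a, ha, fun haD => ?_, b, hb, fun hbC => ?_, E, hE, hEc, hsep⟩
  exacts [hD.insepSet a haD b hb E hE hEc hsep, hC.insepSet a ha b hbC E hE hEc hsep]

lemma InsepSet.exists_maxInsepSet [Finite V] (hA : InsepSet G c A) :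
    ∃ B, MaxInsepSet G c B ∧ A ⊆ B := by
  obtain ⟨B, ⟨hAB, hB⟩, hmax⟩ := Set.Finite.exists_maximalFor id
    {B : Set V | A ⊆ B ∧ InsepSet G c B} (Set.toFinite _) ⟨A, subset_rfl, hA⟩
  exact ⟨B, ⟨hB, fun B' hBB' hB' => (hmax ⟨hAB.trans hBB', hB'⟩ hBB').antisymm hBB'⟩, hAB⟩

lemma Separates.exists_minCliqueSep [Finite V] (h : Separates G E x y) (hE : G.IsClique E)
    (hEc : E.ncard ≤ c) : ∃ F ⊆ E, MinCliqueSep G c F ∧ Separates G F x y := by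
  obtain ⟨F, ⟨hFE, hF⟩, hmin⟩ := Set.Finite.exists_minimalFor id
    {F : Set V | F ⊆ E ∧ Separates G F x y} (Set.toFinite _) ⟨E, subset_rfl, h⟩
  refine ⟨F, hFE, ⟨hE.subset hFE, (Set.ncard_le_ncard hFE).trans hEc, x, y, hF, ?_⟩, hF⟩
  exact fun F' hF'F _ hF' => hF'F.antisymm (hmin ⟨hF'F.trans hFE, hF'⟩ hF'F)

/-- Excursions of the walk out of `T` leave and re-enter `T` through the clique `C`, so a
single clique edge replaces each of them. -/
lemma SimpleGraph.Walk.exists_walk_subset (hC : G.IsClique C) (hCT : C ⊆ T)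
    (hT : ∀ x y, G.Adj x y → x ∈ T → x ∉ C → y ∈ T) (p : G.Walk a b) (hb : b ∈ T) :
    ∃ a', (a ∈ T ∧ a' = a ∨ a ∉ T ∧ a' ∈ C) ∧
      ∃ q : G.Walk a' b, ∀ z ∈ q.support, z ∈ T ∧ z ∈ p.support := by
  induction p with
  | nil => exact ⟨_, .inl ⟨hb, rfl⟩, .nil, by simp [hb]⟩
  | @cons a a' b h p ih =>
    obtain ⟨a'', ha'', q, hq⟩ := ih hb
    have hq' : ∀ z ∈ q.support, z ∈ T ∧ z ∈ (SimpleGraph.Walk.cons h p).support :=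
      fun z hz => ⟨(hq z hz).1, by simp [(hq z hz).2]⟩
    by_cases ha : a ∈ T
    · refine ⟨a, .inl ⟨ha, rfl⟩, ?_⟩
      rcases ha'' with ⟨-, rfl⟩ | ⟨ha', ha''C⟩
      · exact ⟨.cons h q, by simpa [ha] using hq'⟩
      have haC : a ∈ C := by_contra fun haC => ha' (hT a a' h ha haC)
      rcases eq_or_ne a a'' with rfl | hne
      · exact ⟨q, hq'⟩
      · exact ⟨.cons (hC haC ha''C hne) q, by simpa [hCT haC] using hq'⟩
    · refine ⟨a'', .inr ⟨ha, ?_⟩, q, hq'⟩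
      rcases ha'' with ⟨ha', rfl⟩ | ⟨-, ha''C⟩
      · exact by_contra fun ha'C => ha (hT _ a h.symm ha' ha'C)
      · exact ha''C

lemma Separates.inter (h : Separates G E x y) (hC : G.IsClique C) (hCT : C ⊆ T)
    (hT : ∀ x y, G.Adj x y → x ∈ T → x ∉ C → y ∈ T) (hx : x ∈ T) (hy : y ∈ T) :
    Separates G (E ∩ T) x y := by
  refine ⟨fun hx' => h.1 hx'.1, fun hy' => h.2.1 hy'.1, fun p => ?_⟩
  obtain ⟨x', hx', q, hq⟩ := p.exists_walk_subset hC hCT hT hy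
  obtain rfl : x' = x := hx'.elim And.right fun h => absurd hx h.1
  obtain ⟨z, hzE, hz⟩ := h.2.2 q
  exact ⟨z, ⟨hzE, (hq z hz).1⟩, (hq z hz).2⟩

lemma Separates.inter_closedSide (h : Separates G E x y) (hS : G.IsClique S)
    (hx : x ∈ closedSide G S a) (hy : y ∈ closedSide G S a) :
    Separates G (E ∩ closedSide G S a) x y :=
  h.inter hS Set.subset_union_right (fun _ _ hxy hx hxS => mem_closedSide_of_adj hxy hx hxS) hx hy

end

section

variable {G : SimpleGraph V} {A C D : Set V} {a u v w : V} {c : ℕ}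

lemma exists_separates_insert_subset (hatom : NoSmallCliqueSep G c) (hA : InsepSet G c A)
    (hu : u ∈ A) (hC : G.IsClique C) (hCc : C.ncard ≤ c) (hCsep : Separates G C u v)
    (hw : w ∈ C) (ha : a ∈ A) (hDsep : Separates G D a w) :
    ∃ D' ⊆ D, Separates G D' a v ∧
      insert w {x | ReachAvoiding G C v x} ⊆ {x | ReachAvoiding G D' v x} := by
  set T := closedSide G C u
  have hAT : A ⊆ T := fun a' ha' => (em (a' ∈ C)).elim Or.inr fun ha'C =>
    Or.inl ((hA u hu a' ha').reachAvoiding hC hCc hCsep.1 ha'C)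
  have hD' : Separates G (D ∩ T) a w := hDsep.inter_closedSide hC (hAT ha) (Or.inr hw)
  have huv : ¬ ReachAvoiding G C v u := fun h => (separates_iff.1 hCsep).2.2 h.symm
  have hside : ∀ x, ReachAvoiding G C v x → ReachAvoiding G (D ∩ T) v x :=
    fun x hx => hx.of_subset_closedSide huv Set.inter_subset_right
  obtain ⟨p, hp⟩ : ReachAvoiding G (C \ {w}) v u := by
    by_contra h
    refine hatom (C \ {w}) (hC.subset Set.sdiff_subset) ?_
      ⟨v, u, separates_iff.2 ⟨fun hv => hCsep.2.1 hv.1, fun hu => hCsep.1 hu.1, h⟩⟩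
    rw [Set.ncard_sdiff_singleton_of_mem hw]
    omega
  obtain ⟨x, y, hx, hxy, hyC, hyp⟩ :=
    p.exists_reachAvoiding_adj_mem hCsep.2.1 (hCsep.symm.2.2 p)
  obtain rfl : y = w := by_contra fun hyw => hp y hyp ⟨hyC, hyw⟩
  have hvy : ReachAvoiding G (D ∩ T) v y :=
    (hside x hx).trans (.of_adj hxy (hside x hx).right_notMem fun h => hDsep.2.1 h.1)
  refine ⟨D ∩ T, Set.inter_subset_left, separates_iff.2 ⟨fun h => hDsep.1 h.1,
    hvy.left_notMem, fun hav => (separates_iff.1 hD').2.2 (hav.trans hvy)⟩, ?_⟩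
  rintro z (rfl | hz)
  exacts [hvy, hside z hz]

lemma MaxInsepSet.exists_minCliqueSep_subset [Finite V] (hatom : NoSmallCliqueSep G c)
    (hA : MaxInsepSet G c A) (hv : v ∉ A) : ∃ C, MinCliqueSep G c C ∧ C ⊆ A := by
  have hAv : ¬ InsepSet G c (A ∪ {v}) := fun h =>
    hv (hA.2 _ Set.subset_union_left h ▸ Set.mem_union_right A rfl)
  simp only [insepSet_union_iff hA.1 (G.isClique_singleton v).insepSet, CInsep,
    Set.mem_singleton_iff, forall_eq, not_forall, not_not] at hAv
  obtain ⟨a, ha, D, hD, hDc, hDsep⟩ := hAv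
  obtain ⟨C, ⟨hC, hCc, u, hu, hCsep⟩, hmax⟩ := Set.exists_max_image
    {C | G.IsClique C ∧ C.ncard ≤ c ∧ ∃ u ∈ A, Separates G C u v}
    (fun C => {x | ReachAvoiding G C v x}.ncard) (Set.toFinite _) ⟨D, hD, hDc, a, ha, hDsep⟩
  suffices hCA : C ⊆ A by
    obtain ⟨F, hFC, hF, -⟩ := hCsep.exists_minCliqueSep hC hCc
    exact ⟨F, hF, hFC.trans hCA⟩
  refine fun w hw => hA.2 (A ∪ C) Set.subset_union_left ?_ ▸ Set.mem_union_right A hw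
  refine (insepSet_union_iff hA.1 hC.insepSet).2 fun a ha w hw D hD hDc hDsep => ?_
  obtain ⟨D', hD'D, hD'sep, hside⟩ :=
    exists_separates_insert_subset hatom hA.1 hu hC hCc hCsep hw ha hDsep
  have hwC : w ∉ {x | ReachAvoiding G C v x} := fun h => h.right_notMem hw
  have hlt := Set.ncard_lt_ncard ((Set.ssubset_insert hwC).trans_subset hside)
  exact (hmax D' ⟨hD.subset hD'D, (Set.ncard_le_ncard hD'D).trans hDc, a, ha, hD'sep⟩).not_gt hlt

end

namespace TcGraph

variable {G : SimpleGraph V} {C D : Set V} {c : ℕ}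

lemma adj_of_subset {A : AtomNode G c} {C : SepNode G c} (h : C.1 ⊆ A.1) :
    (TcGraph G c).Adj (.inl A) (.inr C) :=
  Or.inl ⟨A, C, rfl, rfl, h⟩

lemma reachable_of_insepSet_union [Finite V] (hC : MinCliqueSep G c C)
    (hD : MinCliqueSep G c D) (h : InsepSet G c (C ∪ D)) :
    (TcGraph G c).Reachable (.inr ⟨C, hC⟩) (.inr ⟨D, hD⟩) := by
  obtain ⟨B, hB, hCD⟩ := h.exists_maxInsepSet
  have hCB : (TcGraph G c).Adj (.inl ⟨B, hB⟩) (.inr ⟨C, hC⟩) :=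
    adj_of_subset (Set.union_subset_iff.1 hCD).1
  have hDB : (TcGraph G c).Adj (.inl ⟨B, hB⟩) (.inr ⟨D, hD⟩) :=
    adj_of_subset (Set.union_subset_iff.1 hCD).2
  exact hCB.reachable.symm.trans hDB.reachable

lemma reachable_of_subset_closedSide [Finite V] {k q : V} (hC : MinCliqueSep G c C)
    (hD : MinCliqueSep G c D) (hDC : D ⊆ closedSide G C k) (hCD : C ⊆ closedSide G D q) :
    (TcGraph G c).Reachable (.inr ⟨C, hC⟩) (.inr ⟨D, hD⟩) := by
  induction hn : (closedSide G C k ∩ closedSide G D q).ncard using Nat.strong_induction_on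
    generalizing C D k q with
  | _ n ih =>
  by_cases hCD' : InsepSet G c (C ∪ D)
  · exact reachable_of_insepSet_union hC hD hCD'
  obtain ⟨a, haC, haD, b, hbD, hbC, E, hE, hEc, hEsep⟩ :=
    exists_separated_of_not_insepSet_union hC.1 hD.1 hCD'
  set X := closedSide G C k
  set Y := closedSide G D q
  have haY : ReachAvoiding G D q a := (hCD haC).resolve_right haD
  have hbX : ReachAvoiding G C k b := (hDC hbD).resolve_right hbC
  have hEXY : E ∩ X ∩ Y ⊆ E := fun z hz => hz.1.1
  obtain ⟨F, hFE, hF, hFsep⟩ :=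
    ((hEsep.inter_closedSide hC.1 (Or.inr haC) (Or.inl hbX)).inter_closedSide hD.1
      (Or.inl haY) (Or.inr hbD)).exists_minCliqueSep (hE.subset hEXY)
      ((Set.ncard_le_ncard hEXY).trans hEc)
  have hab := (separates_iff.1 hFsep).2.2
  have hCF : C ⊆ closedSide G F a := hC.1.subset_closedSide haC hFsep.1
  have hDF : D ⊆ closedSide G F b := hD.1.subset_closedSide hbD hFsep.2.1
  have hFX : F ⊆ X := fun z hz => (hFE hz).1.2
  have hFY : F ⊆ Y := fun z hz => (hFE hz).2
  have hlt₁ : (X ∩ closedSide G F a).ncard < n := hn ▸ Set.ncard_lt_ncard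
    ⟨Set.inter_subset_inter_right X (closedSide_subset_closedSide hab hFY haY hDF),
      fun h => (h ⟨Or.inl hbX, Or.inr hbD⟩).2.elim hab hFsep.2.1⟩
  have hlt₂ : (closedSide G F b ∩ Y).ncard < n := hn ▸ Set.ncard_lt_ncard
    ⟨Set.inter_subset_inter_left Y (closedSide_subset_closedSide (hab ·.symm) hFX hbX hCF),
      fun h => (h ⟨Or.inr haC, Or.inl haY⟩).1.elim (hab ·.symm) hFsep.1⟩
  exact (ih _ hlt₁ hC hF hFX hCF rfl).trans (ih _ hlt₂ hF hD hDF hFY rfl)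

lemma reachable_inr_inr [Finite V] (C D : SepNode G c) :
    (TcGraph G c).Reachable (.inr C) (.inr D) := by
  obtain ⟨C, hC⟩ := C
  obtain ⟨D, hD⟩ := D
  by_cases h : InsepSet G c (C ∪ D)
  · exact reachable_of_insepSet_union hC hD h
  obtain ⟨a, haC, haD, b, hbD, hbC, -⟩ := exists_separated_of_not_insepSet_union hC.1 hD.1 h
  exact reachable_of_subset_closedSide hC hD (hD.1.subset_closedSide hbD hbC)
    (hC.1.subset_closedSide haC haD)

lemma reachable_inr [Finite V] (hatom : NoSmallCliqueSep G c) (C₀ : SepNode G c)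
    (s : AtomNode G c ⊕ SepNode G c) : (TcGraph G c).Reachable (.inr C₀) s := by
  obtain A | C := s
  · obtain ⟨C, hCA⟩ : ∃ C : SepNode G c, C.1 ⊆ A.1 := by
      by_cases hA : A.1 = Set.univ
      · exact ⟨C₀, hA ▸ Set.subset_univ _⟩
      obtain ⟨v, hv⟩ := (Set.ne_univ_iff_exists_notMem _).1 hA
      obtain ⟨C, hC, hCA⟩ := A.2.exists_minCliqueSep_subset hatom hv
      exact ⟨⟨C, hC⟩, hCA⟩
    exact (reachable_inr_inr C₀ C).trans (adj_of_subset hCA).reachable.symm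
  · exact reachable_inr_inr C₀ C

lemma subsingleton_of_isEmpty [Finite V] (hatom : NoSmallCliqueSep G c)
    [IsEmpty (SepNode G c)] : Subsingleton (AtomNode G c ⊕ SepNode G c) := by
  refine ⟨fun s t => ?_⟩
  obtain ⟨A, hA⟩ | C := s
  swap
  · exact isEmptyElim C
  obtain ⟨B, hB⟩ | D := t
  swap
  · exact isEmptyElim D
  by_cases hAuniv : A = Set.univ
  · subst hAuniv
    exact congrArg _ (Subtype.ext (hB.2 _ (Set.subset_univ B) hA.1))
  obtain ⟨v, hv⟩ := (Set.ne_univ_iff_exists_notMem _).1 hAuniv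
  obtain ⟨C, hC, -⟩ := hA.exists_minCliqueSep_subset hatom hv
  exact (IsEmpty.false (α := SepNode G c) ⟨C, hC⟩).elim

end TcGraph

theorem stmt11_general [Fintype V] (G : SimpleGraph V) (c : ℕ) (hatom : NoSmallCliqueSep G c) :
    (TcGraph G c).Connected := by
  obtain ⟨A₀, hA₀, -⟩ := (show InsepSet G c ∅ from fun _ h => h.elim).exists_maxInsepSet
  have : Nonempty (AtomNode G c ⊕ SepNode G c) := ⟨.inl ⟨A₀, hA₀⟩⟩
  refine ⟨fun s t => ?_⟩
  rcases isEmpty_or_nonempty (SepNode G c) with hsep | ⟨⟨C₀⟩⟩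
  · have := TcGraph.subsingleton_of_isEmpty hatom
    exact Subsingleton.elim s t ▸ .refl s
  · exact (TcGraph.reachable_inr hatom C₀ s).symm.trans (TcGraph.reachable_inr hatom C₀ t)

/-- For a connected `(c-1)`-atom `G`, the incidence graph `T_c(G)` of maximal
`c`-atoms and minimal clique separators of size at most `c` is connected. -/
theorem stmt11 [Fintype V] (G : SimpleGraph V) (c : ℕ) (hc : 1 ≤ c)
    (hconn : G.Connected) (hatom : NoSmallCliqueSep G c) :
    (TcGraph G c).Connected :=
  stmt11_general G c hatom
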